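/- The encoding map E preserves snapshots: for every annotation history f and every time point T, τ_T(E(f)) = f(T). -/

import Mathlib

open scoped Classical

namespace TemporalK

variable {K : Type*}

/-- An interval over the time domain `{0, ..., N-1}`: a pair `(b, e)` with `b < e ≤ N`. -/
abbrev TInterval (N : ℕ) := {I : Fin (N + 1) × Fin (N + 1) // I.1 < I.2}

/-- A temporal `K`-element: a function assigning to each interval an element of `K`. -/
abbrev TempEl (N : ℕ) (K : Type*) := TInterval N → K

/-- The interval `I = (b, e)` contains the time point `T` iff `b ≤ T < e`. -/
def Contains {N : ℕ} (I : TInterval N) (T : ℕ) : Prop :=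
  (I.val.1 : ℕ) ≤ T ∧ T < (I.val.2 : ℕ)

/-- The timeslice of `𝒯` at time point `T`: the sum of `𝒯 I` over all intervals `I`
containing `T`. -/
noncomputable def slice {N : ℕ} [CommSemiring K] (𝒯 : TempEl N K) (T : ℕ) : K :=
  ∑ I ∈ Finset.univ.filter (fun I : TInterval N => Contains I T), 𝒯 I

/-- `T` is an (annotation) changepoint of `𝒯` iff `T = 0` or the timeslices at `T - 1`
and `T` differ. -/
def Changepoint {N : ℕ} [CommSemiring K] (𝒯 : TempEl N K) (T : ℕ) : Prop :=
  T = 0 ∨ slice 𝒯 (T - 1) ≠ slice 𝒯 T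

/-- `I = (b, e)` is a changepoint interval of `𝒯` iff `b` is a changepoint, `e` is a
changepoint or equals `N`, and no time point strictly between `b` and `e` is a changepoint. -/
def CPInterval {N : ℕ} [CommSemiring K] (𝒯 : TempEl N K) (I : TInterval N) : Prop :=
  Changepoint 𝒯 (I.val.1 : ℕ) ∧
    (Changepoint 𝒯 (I.val.2 : ℕ) ∨ (I.val.2 : ℕ) = N) ∧
    ∀ T : ℕ, (I.val.1 : ℕ) < T → T < (I.val.2 : ℕ) → ¬ Changepoint 𝒯 T

/-- `K`-coalescing: maps changepoint intervals `(b, e)` to the timeslice at `b` and all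
other intervals to `0`. -/
noncomputable def coal {N : ℕ} [CommSemiring K] (𝒯 : TempEl N K) : TempEl N K :=
  fun I => if CPInterval 𝒯 I then slice 𝒯 (I.val.1 : ℕ) else 0

/-- Snapshot equivalence: equal timeslices at every time point. -/
def SnapEq {N : ℕ} [CommSemiring K] (k k' : TempEl N K) : Prop :=
  ∀ T : ℕ, T < N → slice k T = slice k' T

/-- A temporal `K`-element is coalesced iff it is the `K`-coalescing of some
temporal `K`-element. -/
def Coalesced {N : ℕ} [CommSemiring K] (k : TempEl N K) : Prop :=
  ∃ 𝒯 : TempEl N K, k = coal 𝒯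

/-- Pointwise addition of temporal `K`-elements. -/
def padd {N : ℕ} [CommSemiring K] (k k' : TempEl N K) : TempEl N K :=
  fun I => k I + k' I

/-- Pointwise multiplication of temporal `K`-elements:
`(k ·_P k')(I) = Σ k(I')·k'(I'')` over all pairs `(I', I'')` whose intersection is
nonempty and equals `I`. -/
noncomputable def pmul {N : ℕ} [CommSemiring K] (k k' : TempEl N K) : TempEl N K :=
  fun I =>
    ∑ p ∈ Finset.univ.filter (fun p : TInterval N × TInterval N =>
        max (p.1.val.1 : ℕ) (p.2.val.1 : ℕ) < min (p.1.val.2 : ℕ) (p.2.val.2 : ℕ) ∧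
        (I.val.1 : ℕ) = max (p.1.val.1 : ℕ) (p.2.val.1 : ℕ) ∧
        (I.val.2 : ℕ) = min (p.1.val.2 : ℕ) (p.2.val.2 : ℕ)),
      k p.1 * k' p.2

/-- Addition of the period semiring: coalesced pointwise addition. -/
noncomputable def tadd {N : ℕ} [CommSemiring K] (k k' : TempEl N K) : TempEl N K :=
  coal (padd k k')

/-- Multiplication of the period semiring: coalesced pointwise multiplication. -/
noncomputable def tmul {N : ℕ} [CommSemiring K] (k k' : TempEl N K) : TempEl N K :=
  coal (pmul k k')

/-- The zero of the period semiring: maps every interval to `0`. -/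
def zeroT (N : ℕ) (K : Type*) [CommSemiring K] : TempEl N K := fun _ => 0

/-- The one of the period semiring: maps the interval `(0, N)` to `1` and every other
interval to `0`. -/
def oneT (N : ℕ) (K : Type*) [CommSemiring K] : TempEl N K :=
  fun I => if (I.val.1 : ℕ) = 0 ∧ (I.val.2 : ℕ) = N then 1 else 0

/-- Encoding of an annotation history `f : time points → K` as a coalesced temporal
`K`-element: coalesce the element assigning `f T` to each singleton interval `(T, T+1)`. -/
noncomputable def enc {N : ℕ} [CommSemiring K] (f : Fin N → K) : TempEl N K :=
  coal (fun I =>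
    if h : (I.val.2 : ℕ) = (I.val.1 : ℕ) + 1 then
      f ⟨(I.val.1 : ℕ), by have := I.val.2.isLt; omega⟩
    else 0)

/-- The natural preorder of the semiring `K`. -/
def nle [CommSemiring K] (a b : K) : Prop := ∃ c, a + c = b

/-- The natural preorder of the period semiring (on coalesced temporal `K`-elements). -/
def tle {N : ℕ} [CommSemiring K] (k k' : TempEl N K) : Prop :=
  ∃ k'' : TempEl N K, Coalesced k'' ∧ tadd k k'' = k'

/-- The pointwise monus: assigns `τ_T(k) −_K τ_T(k')` to each singleton interval
`(T, T+1)` and `0` to every non-singleton interval. -/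
noncomputable def pmonus {N : ℕ} [CommSemiring K] (monus : K → K → K)
    (k k' : TempEl N K) : TempEl N K :=
  fun I =>
    if (I.val.2 : ℕ) = (I.val.1 : ℕ) + 1 then
      monus (slice k (I.val.1 : ℕ)) (slice k' (I.val.1 : ℕ))
    else 0

/-- The monus of the period semiring: coalesced pointwise monus. -/
noncomputable def tmonus {N : ℕ} [CommSemiring K] (monus : K → K → K)
    (k k' : TempEl N K) : TempEl N K :=
  coal (pmonus monus k k')

end TemporalK

open TemporalK

/-!
Changepoint intervals are pairwise disjoint and cover every time point, and no timeslice
changes inside one of them. Hence the coalesced element carries, at each `T < N`, exactly one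
nonzero summand, the slice at the start of the changepoint interval through `T`, which equals
the slice at `T`: coalescing preserves timeslices. The element coalesced by `enc f` has the
singleton interval `(T, T + 1)` as its only nonzero interval through `T`, so its slice at `T`
is `f T`.
-/

namespace TemporalK

variable {N : ℕ} {K : Type*} [CommSemiring K]

theorem TInterval.ext {I J : TInterval N} (h₁ : (I.val.1 : ℕ) = J.val.1)
    (h₂ : (I.val.2 : ℕ) = J.val.2) : I = J :=
  Subtype.ext (Prod.ext (Fin.ext h₁) (Fin.ext h₂))

def TInterval.single (T : Fin N) : TInterval N :=
  ⟨(T.castSucc, T.succ), Fin.castSucc_lt_succ⟩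

theorem contains_single (T : Fin N) : Contains (TInterval.single T) T := by
  simp [Contains, TInterval.single]

noncomputable def ofHistory (f : Fin N → K) : TempEl N K := fun I =>
  if h : (I.val.2 : ℕ) = (I.val.1 : ℕ) + 1 then
    f ⟨(I.val.1 : ℕ), by have := I.val.2.isLt; omega⟩
  else 0

theorem enc_eq_coal_ofHistory (f : Fin N → K) : enc f = coal (ofHistory f) := rfl

theorem slice_eq_apply_of_contains {𝒯 : TempEl N K} {T : ℕ} {I₀ : TInterval N}
    (hI₀ : Contains I₀ T) (h : ∀ I, Contains I T → I ≠ I₀ → 𝒯 I = 0) :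
    slice 𝒯 T = 𝒯 I₀ :=
  Finset.sum_eq_single_of_mem I₀ (by simpa using hI₀) fun I hI ↦ h I (by simpa using hI)

theorem slice_ofHistory (f : Fin N → K) (T : Fin N) : slice (ofHistory f) T = f T := by
  rw [slice_eq_apply_of_contains (contains_single T)]
  · simp [ofHistory, TInterval.single]
  · rintro I ⟨hbT, hTe⟩ hI
    refine dif_neg fun hsingle ↦ hI (TInterval.ext ?_ ?_) <;>
      simp only [TInterval.single, Fin.val_castSucc, Fin.val_succ] <;> omega

theorem slice_eq_of_forall_not_changepoint {𝒯 : TempEl N K} {b T : ℕ} (hbT : b ≤ T)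
    (h : ∀ S, b < S → S ≤ T → ¬ Changepoint 𝒯 S) : slice 𝒯 b = slice 𝒯 T := by
  induction T, hbT using Nat.le_induction with
  | base => rfl
  | succ n hbn ih =>
    have hn : slice 𝒯 n = slice 𝒯 (n + 1) := by
      by_contra hne
      exact h (n + 1) (by omega) le_rfl (Or.inr (by simpa using hne))
    rw [← hn]
    exact ih fun S h₁ h₂ ↦ h S h₁ (by omega)

theorem CPInterval.fst_le_of_contains {𝒯 : TempEl N K} {I J : TInterval N} {T : ℕ}
    (hI : CPInterval 𝒯 I) (hJ : CPInterval 𝒯 J) (hIT : Contains I T) (hJT : Contains J T) :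
    (I.val.1 : ℕ) ≤ J.val.1 := by
  by_contra! hlt
  exact hJ.2.2 _ hlt (by linarith [hIT.1, hJT.2]) hI.1

theorem CPInterval.snd_le_of_contains {𝒯 : TempEl N K} {I J : TInterval N} {T : ℕ}
    (hI : CPInterval 𝒯 I) (hJ : CPInterval 𝒯 J) (hIT : Contains I T) (hJT : Contains J T) :
    (I.val.2 : ℕ) ≤ J.val.2 := by
  by_contra! hlt
  rcases hJ.2.1 with hcp | hN
  · exact hI.2.2 _ (by linarith [hIT.1, hJT.2]) hlt hcp
  · have := I.val.2.isLt
    omega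

theorem CPInterval.eq_of_contains {𝒯 : TempEl N K} {I J : TInterval N} {T : ℕ}
    (hI : CPInterval 𝒯 I) (hJ : CPInterval 𝒯 J) (hIT : Contains I T) (hJT : Contains J T) :
    I = J :=
  TInterval.ext
    (le_antisymm (hI.fst_le_of_contains hJ hIT hJT) (hJ.fst_le_of_contains hI hJT hIT))
    (le_antisymm (hI.snd_le_of_contains hJ hIT hJT) (hJ.snd_le_of_contains hI hJT hIT))

/-- The changepoint interval through `T` runs from the last changepoint `≤ T` to the first
changepoint `> T`, or to `N` if there is none. -/
theorem exists_cpInterval_contains (𝒯 : TempEl N K) {T : ℕ} (hT : T < N) :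
    ∃ I, CPInterval 𝒯 I ∧ Contains I T := by
  set b := Nat.findGreatest (Changepoint 𝒯) T
  have hb : Changepoint 𝒯 b := Nat.findGreatest_spec (Nat.zero_le T) (Or.inl rfl)
  have hbT : b ≤ T := Nat.findGreatest_le T
  have hex : ∃ e, T < e ∧ (Changepoint 𝒯 e ∨ e = N) := ⟨N, hT, Or.inr rfl⟩
  obtain ⟨hTe, he⟩ := Nat.find_spec hex
  have heN : Nat.find hex ≤ N := Nat.find_min' hex ⟨hT, Or.inr rfl⟩
  refine ⟨⟨(⟨b, by omega⟩, ⟨Nat.find hex, by omega⟩), Fin.mk_lt_mk.mpr (by omega)⟩,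
    ⟨hb, he, fun S hbS hSe hS ↦ ?_⟩, hbT, hTe⟩
  by_cases hST : S ≤ T
  · exact Nat.findGreatest_is_greatest hbS hST hS
  · exact Nat.find_min hex hSe ⟨by omega, Or.inl hS⟩

theorem slice_coal (𝒯 : TempEl N K) {T : ℕ} (hT : T < N) :
    slice (coal 𝒯) T = slice 𝒯 T := by
  obtain ⟨I₀, hI₀, hI₀T⟩ := exists_cpInterval_contains 𝒯 hT
  have hzero : ∀ I, Contains I T → I ≠ I₀ → coal 𝒯 I = 0 := fun I hIT hne ↦
    if_neg fun hI ↦ hne (hI.eq_of_contains hI₀ hIT hI₀T)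
  rw [slice_eq_apply_of_contains hI₀T hzero, coal, if_pos hI₀]
  exact slice_eq_of_forall_not_changepoint hI₀T.1
    fun S hbS hST ↦ hI₀.2.2 S hbS (hST.trans_lt hI₀T.2)

end TemporalK

theorem enc_preserves_snapshots_general {N : ℕ} {K : Type*} [CommSemiring K]
    (f : Fin N → K) (T : Fin N) :
    slice (enc f) (T : ℕ) = f T := by
  rw [enc_eq_coal_ofHistory, slice_coal _ T.isLt, slice_ofHistory]

theorem enc_preserves_snapshots {N : ℕ} (hN : 1 ≤ N) {K : Type*} [CommSemiring K]
    (f : Fin N → K) (T : Fin N) :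
    slice (enc f) (T : ℕ) = f T :=
  enc_preserves_snapshots_general f T
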